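/- Suppose c = (c_1,…,c_q) is a point on the simplex with two distinct indices k ≠ ℓ such that c_k = c_ℓ > 1/β, and c_k + γ ≤ 1 where γ := c_k - 1/β. Then t ↦ F_β(c + γt(e_ℓ - e_k)) is strictly decreasing on (0,1), where F_β(x) = -(1/2)|x|² + (1/β)∑ x_m log x_m. -/

import Mathlib

open Real Finset Set

/-!
Only the coordinates `k` and `ℓ` move along the segment, so with `a = c k = c ℓ`, `b = 1/β` and
`G(x) = -x²/2 + b x log x` the function is `s ↦ G(a + s) + G(a - s)` plus a constant, at
`s = γ t ∈ (0, a - b)`. Its derivative is `G'(a + s) - G'(a - s) = φ(a - s) - φ(a + s)` with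
`φ(x) = x - b log x`, and `φ` is strictly increasing on `[b, ∞)`, which contains `a - s < a + s`.
-/

theorem strictMonoOn_sub_mul_log {b : ℝ} (hb : 0 < b) :
    StrictMonoOn (fun x => x - b * log x) (Ici b) := by
  refine strictMonoOn_of_deriv_pos (convex_Ici b) ?_ ?_
  · exact continuousOn_id.sub (continuousOn_const.mul
      (continuousOn_log.mono fun x hx => (hb.trans_le hx).ne'))
  · intro x hx
    rw [interior_Ici] at hx
    rw [((hasDerivAt_id' x).fun_sub ((hasDerivAt_log (hb.trans hx).ne').const_mul b)).deriv,
      sub_pos, ← div_eq_mul_inv, div_lt_one (hb.trans hx)]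
    exact hx

noncomputable def freeEnergyDensity (b x : ℝ) : ℝ := -(1 / 2) * x ^ 2 + b * (x * log x)

theorem hasDerivAt_freeEnergyDensity (b : ℝ) {x : ℝ} (hx : x ≠ 0) :
    HasDerivAt (freeEnergyDensity b) (-x + b * (log x + 1)) x := by
  refine (((hasDerivAt_pow 2 x).const_mul (-(1 / 2))).fun_add
    ((hasDerivAt_mul_log hx).const_mul b)).congr_deriv ?_
  push_cast
  ring

theorem strictAntiOn_freeEnergyDensity_add_sub {a b : ℝ} (hb : 0 < b) :
    StrictAntiOn (fun s => freeEnergyDensity b (a + s) + freeEnergyDensity b (a - s))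
      (Icc 0 (a - b)) := by
  have hpos : ∀ s ∈ Icc 0 (a - b), b ≤ a - s ∧ 0 < a - s ∧ 0 < a + s := fun s hs =>
    ⟨by linarith [hs.2], by linarith [hs.2], by linarith [hs.1, hs.2]⟩
  have hderiv : ∀ s ∈ Icc 0 (a - b), HasDerivAt
      (fun s => freeEnergyDensity b (a + s) + freeEnergyDensity b (a - s))
      ((a - s - b * log (a - s)) - (a + s - b * log (a + s))) s := fun s hs => by
    obtain ⟨-, hsub, hadd⟩ := hpos s hs
    have h₁ := (hasDerivAt_freeEnergyDensity b hadd.ne').comp s ((hasDerivAt_id s).const_add a)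
    have h₂ := (hasDerivAt_freeEnergyDensity b hsub.ne').comp s ((hasDerivAt_id s).const_sub a)
    exact (h₁.fun_add h₂).congr_deriv (by ring)
  refine strictAntiOn_of_deriv_neg (convex_Icc 0 (a - b))
    (fun s hs => (hderiv s hs).continuousAt.continuousWithinAt) fun s hs => ?_
  rw [interior_Icc] at hs
  rw [(hderiv s (Ioo_subset_Icc_self hs)).deriv, sub_neg]
  exact strictMonoOn_sub_mul_log hb (hpos s (Ioo_subset_Icc_self hs)).1
    (by rw [Set.mem_Ici]; linarith [hs.1, hs.2]) (by linarith [hs.1])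

theorem sum_comp_add_mul_ite_sub_ite {ι M : Type*} [Fintype ι] [DecidableEq ι] [AddCommMonoid M]
    (G : ℝ → M) (c : ι → ℝ) {k ℓ : ι} (hkl : k ≠ ℓ) (s : ℝ) :
    ∑ m, G (c m + s * ((if m = ℓ then 1 else 0) - (if m = k then 1 else 0))) =
      G (c ℓ + s) + G (c k - s) + ∑ m ∈ (univ.erase ℓ).erase k, G (c m) := by
  rw [← add_sum_erase _ _ (mem_univ ℓ), ← add_sum_erase _ _ (mem_erase.2 ⟨hkl, mem_univ k⟩),
    ← add_assoc]
  congr 1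
  · simp [hkl, hkl.symm, sub_eq_add_neg]
  · refine sum_congr rfl fun m hm => ?_
    obtain ⟨hmk, hmℓ⟩ : m ≠ k ∧ m ≠ ℓ := by simpa using hm
    simp [hmk, hmℓ]

theorem descent_from_C4_point_general (q : ℕ) (β : ℝ) (hβ : 0 < β)
    (F : (Fin q → ℝ) → ℝ)
    (hF : ∀ x : Fin q → ℝ,
      F x = -(1 / 2) * (∑ m, (x m) ^ 2) + (1 / β) * ∑ m, x m * Real.log (x m))
    (c : Fin q → ℝ)
    (k ℓ : Fin q) (hkl : k ≠ ℓ) (hckl : c k = c ℓ) (hck : 1 / β < c k)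
    (γ : ℝ) (hγ : γ = c k - 1 / β) :
    StrictAntiOn (fun t : ℝ => F (fun m => c m + γ * t *
      ((if m = ℓ then 1 else 0) - (if m = k then 1 else 0))))
      (Set.Ioo (0 : ℝ) 1) := by
  have hF' : ∀ x, F x = ∑ m, freeEnergyDensity (1 / β) (x m) := fun x => by
    simp only [hF, freeEnergyDensity, sum_add_distrib, mul_sum]
  have hγpos : 0 < γ := by linarith
  have hmaps : ∀ t ∈ Ioo (0 : ℝ) 1, γ * t ∈ Icc 0 (c k - 1 / β) := fun t ht => by
    rw [← hγ]
    exact ⟨by nlinarith [ht.1], by nlinarith [ht.2]⟩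
  intro t ht u hu htu
  simp only [hF', sum_comp_add_mul_ite_sub_ite _ c hkl, ← hckl, add_lt_add_iff_right]
  exact strictAntiOn_freeEnergyDensity_add_sub (one_div_pos.2 hβ) (hmaps t ht) (hmaps u hu)
    (by gcongr)

/-- From any simplex point `c` with two equal coordinates `c k = c ℓ > 1/β`,
the map `t ↦ F_β(c + γ t (e_ℓ - e_k))` with `γ = c k - 1/β` is strictly
decreasing on `(0,1)`. -/
theorem descent_from_C4_point (q : ℕ) (hq : 2 ≤ q) (β : ℝ) (hβ : 0 < β)
    (F : (Fin q → ℝ) → ℝ)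
    (hF : ∀ x : Fin q → ℝ,
      F x = -(1 / 2) * (∑ m, (x m) ^ 2) + (1 / β) * ∑ m, x m * Real.log (x m))
    (c : Fin q → ℝ) (hcpos : ∀ m, 0 < c m) (hcsum : ∑ m, c m = 1)
    (k ℓ : Fin q) (hkl : k ≠ ℓ) (hckl : c k = c ℓ) (hck : 1 / β < c k)
    (γ : ℝ) (hγ : γ = c k - 1 / β) (hlt : c ℓ + γ < 1) :
    StrictAntiOn (fun t : ℝ => F (fun m => c m + γ * t *
      ((if m = ℓ then 1 else 0) - (if m = k then 1 else 0))))
      (Set.Ioo (0 : ℝ) 1) :=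
  descent_from_C4_point_general q β hβ F hF c k ℓ hkl hckl hck γ hγ
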